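/- In the Hahn series field F = HahnSeries ℝ ℝ, fix a ∈ F⁺ = {x : x ≠ 0, 0 < leadingCoeff x} with a ≠ 1. Then the map ϱ_a : ℝ → F⁺ given by γ ↦ tp a γ is an injective group homomorphism from the additive group ℝ into the multiplicative group F⁺: tp a (γ + γ') = (tp a γ)·(tp a γ') for all γ, γ' ∈ ℝ, and tp a γ = tp a γ' implies γ = γ'. -/

import Mathlib

open HahnSeries

/-- The exponential summable family `n ↦ (n!)⁻¹ • bⁿ` of an element `b` of positive
order in the Hahn series field. -/
noncomputable def expFamily (b : HahnSeries ℝ ℝ) (hb : 0 < b.orderTop) :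
    SummableFamily ℝ ℝ ℕ where
  toFun n := ((n.factorial : ℝ))⁻¹ • b ^ n
  isPWO_iUnion_support' := by
    refine (SummableFamily.powers b).isPWO_iUnion_support.mono ?_
    intro g hg
    obtain ⟨n, hn⟩ := Set.mem_iUnion.mp hg
    refine Set.mem_iUnion.mpr ⟨n, ?_⟩
    have hn' : (((n.factorial : ℝ))⁻¹ • b ^ n).coeff g ≠ 0 := hn
    have hbn : (b ^ n).coeff g ≠ 0 := fun h => hn' (by rw [HahnSeries.coeff_smul, h, smul_zero])
    rw [SummableFamily.powers_of_orderTop_pos hb]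
    exact hbn
  finite_co_support' g := by
    refine ((SummableFamily.powers b).finite_co_support g).subset ?_
    intro n hn
    simp only [Set.mem_setOf_eq] at hn ⊢
    intro h
    apply hn
    rw [HahnSeries.coeff_smul]
    have h' : (b ^ n).coeff g = 0 := by
      rw [← SummableFamily.powers_of_orderTop_pos hb]; exact h
    rw [h', smul_zero]

/-- The restricted exponential on the maximal ideal of the valuation ring:
`E b = ∑_{n} (n!)⁻¹ bⁿ` when `0 < orderTop b`, and (junk value) `0` otherwise. -/
noncomputable def E (b : HahnSeries ℝ ℝ) : HahnSeries ℝ ℝ :=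
  if hb : 0 < b.orderTop then (expFamily b hb).hsum else 0

/-- The exponential on the valuation ring `O = {x : 0 ≤ orderTop x}`, combining the
real exponential on the constant term with the restricted exponential `E`. -/
noncomputable def expO (a : HahnSeries ℝ ℝ) : HahnSeries ℝ ℝ :=
  HahnSeries.single (0 : ℝ) (Real.exp (a.coeff 0)) *
    E (a - HahnSeries.single (0 : ℝ) (a.coeff 0))

/-- The logarithm on positive units: the inverse of the bijection `expO : O → U⁺`. -/
noncomputable def logO (x : HahnSeries ℝ ℝ) : HahnSeries ℝ ℝ :=
  Function.invFunOn expO {a : HahnSeries ℝ ℝ | 0 ≤ a.orderTop} x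

/-- The power `b ^ c = expO (c · logO b)` for `b ∈ U⁺` and `c ∈ O`. -/
noncomputable def hpow (b c : HahnSeries ℝ ℝ) : HahnSeries ℝ ℝ :=
  expO (c * logO b)

/-- Membership in the group `U⁺` of positive units of the valuation ring. -/
def memUplus (x : HahnSeries ℝ ℝ) : Prop :=
  x ≠ 0 ∧ x.order = 0 ∧ 0 < x.leadingCoeff

/-- The signed valuation on the Hahn series field `HahnSeries ℝ ℝ`. -/
noncomputable def vv (x : HahnSeries ℝ ℝ) : ℝ :=
  Real.sign x.leadingCoeff * Real.exp (-x.order)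

/-- The diagonal cross-section `π : ℝ^× → HahnSeries ℝ ℝ`. -/
noncomputable def diagPi (a : ℝ) : HahnSeries ℝ ℝ :=
  HahnSeries.single (-Real.log |a|) a

/-- The tempered power `a^γ = π((vv a)^γ) · (a / π(vv a))^{single 0 γ}`, for `a ∈ F⁺`
and `γ ∈ ℝ`, where `(vv a)^γ` is the real power `Real.rpow`. -/
noncomputable def tp (a : HahnSeries ℝ ℝ) (γ : ℝ) : HahnSeries ℝ ℝ :=
  diagPi ((vv a) ^ γ) * hpow (a / diagPi (vv a)) (HahnSeries.single (0 : ℝ) γ)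

/-!
Write `a = π(vv a) · u` with `u ∈ U⁺`, so that `tp a γ = π((vv a)^γ) · expO (γ • logO u)`.
The first factor is multiplicative in `γ` because `π` and the real power are. For the second,
`expO` along a line `γ ↦ γ • w` is the evaluation of `exp (γX)` at a series of positive order, and
`exp (γX) · exp (γ'X) = exp ((γ + γ')X)`. That `logO u ∈ O` and `expO (logO u) = u` comes from
evaluating `log (1 + X)` at `u / u₀ - 1`: evaluation is compatible with substitution, and
`exp ∘ log (1 + X) = 1 + X` as formal power series.

For injectivity, if `a.order ≠ 0` then `tp a γ` has order `γ · a.order`. Otherwise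
`tp a γ = expO (γ • logO a)` with `logO a ≠ 0` because `a ≠ 1`, and `expO w = 1` forces `w = 0`,
since the coefficient of `E b` at `b.order` is the leading coefficient of `b`.
-/

namespace PowerSeries

section Derivative

variable {A : Type*} [CommSemiring A]

theorem coeff_X_mul_derivative (f : A⟦X⟧) (n : ℕ) :
    coeff n (X * d⁄dX A f) = n * coeff n f := by
  cases n with
  | zero => simp
  | succ n => rw [coeff_succ_X_mul, coeff_derivative, mul_comm, Nat.cast_succ]

theorem eq_zero_of_one_add_X_mul_derivative_eq_self [IsAddTorsionFree A] {f : A⟦X⟧}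
    (hf : (1 + X) * d⁄dX A f = f) (h0 : constantCoeff f = 0) : f = 0 := by
  ext n
  induction n with
  | zero => simpa using h0
  | succ n ih =>
    have h := congrArg (coeff n) hf
    rw [map_zero] at ih ⊢
    rw [add_mul, one_mul, map_add, coeff_derivative, coeff_X_mul_derivative, ih, mul_zero,
      add_zero, mul_comm, ← Nat.cast_succ, ← nsmul_eq_mul] at h
    exact (smul_right_inj n.succ_ne_zero).mp (h.trans (smul_zero _).symm)

end Derivative

section Log

variable {A : Type*} [CommRing A]

theorem one_add_X_mul_derivative_log [Algebra ℚ A] : (1 + X) * d⁄dX A (log A) = 1 := by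
  ext n
  rw [add_mul, one_mul, map_add, deriv_log]
  cases n with
  | zero => simp
  | succ n =>
    rw [coeff_succ_X_mul]
    simp [pow_succ]

theorem exp_subst_log [Algebra ℚ A] [IsAddTorsionFree A] : (exp A).subst (log A) = 1 + X := by
  have hlog := HasSubst.log (A := A)
  -- both sides solve `(1 + X) f' = f` with the same constant term
  rw [← sub_eq_zero]
  apply eq_zero_of_one_add_X_mul_derivative_eq_self
  · rw [map_sub, derivative_subst hlog, derivative_exp, map_add, Derivation.map_one_eq_zero,
      derivative_X]
    linear_combination ((exp A).subst (log A)) * (one_add_X_mul_derivative_log (A := A))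
  · have h1 : (exp A).subst (log A) - 1 = (exp A - 1).subst (log A) := by
      rw [subst_sub hlog, ← coe_substAlgHom hlog, map_one]
    have h2 : constantCoeff ((exp A - 1).subst (log A) : A⟦X⟧) = 0 :=
      constantCoeff_subst_eq_zero constantCoeff_log _ (by simp)
    rw [sub_add_eq_sub_sub, map_sub, h1, h2, constantCoeff_X, sub_zero]

end Log

section HEval

open HahnSeries SummableFamily

variable {Γ R : Type*} [AddCommMonoid Γ] [LinearOrder Γ] [IsOrderedCancelAddMonoid Γ] [CommRing R]

theorem coeff_pow_eq_zero_of_lt {L : R⟦X⟧} (hL : constantCoeff L = 0) {m n : ℕ} (h : m < n) :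
    coeff m (L ^ n) = 0 :=
  X_pow_dvd_iff.mp (pow_dvd_pow_of_dvd (X_dvd_iff.mpr hL) n) m h

theorem exists_coeff_pow_eq_zero {t : R⟦Γ⟧} (ht : 0 < t.orderTop) (g : Γ) :
    ∃ N, ∀ m, N ≤ m → (t ^ m).coeff g = 0 := by
  obtain ⟨B, hB⟩ := (pow_finite_co_support ht g).bddAbove
  exact ⟨B + 1, fun m hm => by_contra fun h => absurd (hB h) (by omega)⟩

theorem coeff_heval_eq_sum {t : R⟦Γ⟧} (ht : 0 < t.orderTop) (f : R⟦X⟧) {g : Γ} {N : ℕ}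
    (hN : ∀ m, N ≤ m → (t ^ m).coeff g = 0) :
    (heval t f).coeff g = ∑ m ∈ Finset.range N, coeff m f * (t ^ m).coeff g := by
  rw [coeff_heval, finsum_eq_sum_of_support_subset _ (s := Finset.range N)]
  · simp [powerSeriesFamily_of_orderTop_pos ht]
  · intro m hm
    simp only [Function.mem_support, coeff_apply, powerSeriesFamily_of_orderTop_pos ht,
      HahnSeries.coeff_smul, smul_eq_mul] at hm
    by_contra h
    exact hm (by rw [hN m (by simpa using h), mul_zero])

theorem zero_le_orderTop_heval {t : R⟦Γ⟧} (ht : 0 < t.orderTop) (f : R⟦X⟧) :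
    0 ≤ (heval t f).orderTop := by
  refine le_orderTop_iff_forall.mpr fun g hg => ?_
  rw [coeff_heval_eq_sum ht f (N := 0), Finset.sum_range_zero]
  exact fun m _ => coeff_eq_zero_of_lt_orderTop <| hg.trans_le <|
    (nsmul_nonneg ht.le m).trans orderTop_nsmul_le_orderTop_pow

theorem zero_lt_orderTop_heval {t : R⟦Γ⟧} (ht : 0 < t.orderTop) {L : R⟦X⟧}
    (hL : constantCoeff L = 0) : 0 < (heval t L).orderTop := by
  obtain ⟨L', rfl⟩ := X_dvd_iff.mpr hL
  rw [map_mul, heval_X t ht]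
  exact ht.trans_le <| (le_add_of_nonneg_right (zero_le_orderTop_heval ht L')).trans
    orderTop_add_le_mul

theorem heval_heval {t : R⟦Γ⟧} (ht : 0 < t.orderTop) {L : R⟦X⟧} (hL : constantCoeff L = 0)
    (f : R⟦X⟧) : heval (heval t L) f = heval t (f.subst L) := by
  have hsubst := HasSubst.of_constantCoeff_zero' hL
  ext g
  obtain ⟨N, hN⟩ := exists_coeff_pow_eq_zero ht g
  have hpow : ∀ n, ((heval t L) ^ n).coeff g
      = ∑ m ∈ Finset.range N, coeff m (L ^ n) * (t ^ m).coeff g := fun n => by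
    rw [← map_pow, coeff_heval_eq_sum ht _ hN]
  have hsub : ∀ m < N, coeff m (f.subst L) = ∑ n ∈ Finset.range N, coeff n f * coeff m (L ^ n) := by
    intro m hm
    rw [coeff_subst' hsubst, finsum_eq_sum_of_support_subset _ (s := Finset.range N)]
    · simp [smul_eq_mul]
    · intro n hn
      by_contra h
      simp only [Finset.coe_range, Set.mem_Iio, not_lt] at h
      exact hn (by simp only [coeff_pow_eq_zero_of_lt hL (show m < n by omega), smul_zero])
  -- both sides are the finite double sum of `coeff n f * coeff m (L ^ n) * (t ^ m).coeff g`
  rw [coeff_heval_eq_sum (zero_lt_orderTop_heval ht hL) f (N := N), coeff_heval_eq_sum ht _ hN]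
  · simp_rw [hpow, Finset.mul_sum]
    rw [Finset.sum_comm]
    refine Finset.sum_congr rfl fun m hm => ?_
    rw [hsub m (Finset.mem_range.mp hm), Finset.sum_mul]
    exact Finset.sum_congr rfl fun n _ => by ring
  · intro n hn
    rw [hpow]
    exact Finset.sum_eq_zero fun m hm => by
      rw [coeff_pow_eq_zero_of_lt hL ((Finset.mem_range.mp hm).trans_le hn), zero_mul]

theorem heval_smul {t : R⟦Γ⟧} (ht : 0 < t.orderTop) (r : R) (f : R⟦X⟧) :
    heval (r • t) f = heval t (rescale r f) := by
  have hX : heval t (r • X) = r • t := by rw [map_smul, heval_X t ht]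
  rw [← hX, heval_heval ht (by simp), rescale_eq_subst]

theorem coeff_heval_order {t : R⟦Γ⟧} (ht : 0 < t.orderTop) (ht0 : t ≠ 0) (f : R⟦X⟧) :
    (heval t f).coeff t.order = coeff 1 f * t.leadingCoeff := by
  have hord : 0 < t.order := (zero_lt_orderTop_iff ht0).mp ht
  have hvanish : ∀ m ≠ 1, (t ^ m).coeff t.order = 0 := by
    rintro (_ | _ | m) hm
    · simp [HahnSeries.coeff_one, hord.ne']
    · contradiction
    · refine coeff_eq_zero_of_lt_orderTop (lt_of_lt_of_le ?_ orderTop_nsmul_le_orderTop_pow)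
      rw [← order_eq_orderTop_of_ne_zero ht0, ← WithTop.coe_nsmul, WithTop.coe_lt_coe, succ_nsmul]
      exact lt_add_of_pos_left _ (nsmul_pos hord m.succ_ne_zero)
  obtain ⟨N, hN⟩ := exists_coeff_pow_eq_zero ht t.order
  rw [coeff_heval_eq_sum ht f (N := N + 2) fun m hm => hN m (by omega),
    Finset.sum_eq_single_of_mem 1 (by simp) fun m _ hm => by rw [hvanish m hm, mul_zero],
    pow_one, leadingCoeff_eq]

end HEval

end PowerSeries

namespace HahnSeries

variable {Γ R : Type*} [Zero Γ] [LinearOrder Γ]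

theorem zero_lt_orderTop_of_coeff_eq_zero [Zero R] {x : R⟦Γ⟧} (h : ∀ g ≤ 0, x.coeff g = 0) :
    0 < x.orderTop :=
  (le_orderTop_iff_forall.mpr fun g hg => h g (WithTop.coe_lt_coe.mp hg).le).lt_of_ne
    fun h0 => coeff_orderTop_ne h0.symm (h 0 le_rfl)

theorem zero_lt_orderTop_sub_single_coeff_zero [AddGroup R] {x : R⟦Γ⟧} (hx : 0 ≤ x.orderTop) :
    0 < (x - single 0 (x.coeff 0)).orderTop := by
  refine zero_lt_orderTop_of_coeff_eq_zero fun g hg => ?_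
  rcases hg.lt_or_eq with hg | rfl
  · rw [coeff_sub, coeff_single_of_ne hg.ne, sub_zero]
    exact coeff_eq_zero_of_lt_orderTop (hx.trans_lt' (WithTop.coe_lt_coe.mpr hg))
  · simp

end HahnSeries

section

open PowerSeries

theorem E_eq_heval {b : HahnSeries ℝ ℝ} (hb : 0 < b.orderTop) : E b = heval b (exp ℝ) := by
  rw [E, dif_pos hb, heval_apply]
  congr 1
  ext n : 1
  simp [expFamily, SummableFamily.powerSeriesFamily_of_orderTop_pos hb, coeff_exp]

theorem E_smul_add {t : HahnSeries ℝ ℝ} (ht : 0 < t.orderTop) (γ γ' : ℝ) :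
    E ((γ + γ') • t) = E (γ • t) * E (γ' • t) := by
  have hpos : ∀ r : ℝ, 0 < (r • t).orderTop := fun r => ht.trans_le (orderTop_le_orderTop_smul r t)
  rw [E_eq_heval (hpos _), E_eq_heval (hpos _), E_eq_heval (hpos _), heval_smul ht,
    heval_smul ht, heval_smul ht, ← map_mul, exp_mul_exp_eq_exp_add]

theorem E_heval_log {t : HahnSeries ℝ ℝ} (ht : 0 < t.orderTop) : E (heval t (log ℝ)) = 1 + t := by
  rw [E_eq_heval (zero_lt_orderTop_heval ht constantCoeff_log), heval_heval ht constantCoeff_log,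
    exp_subst_log, map_add, map_one, heval_X t ht]

theorem eq_zero_of_E_eq_one {b : HahnSeries ℝ ℝ} (hb : 0 < b.orderTop) (h : E b = 1) : b = 0 := by
  by_contra hb0
  have hcoeff := coeff_heval_order hb hb0 (exp ℝ)
  rw [← E_eq_heval hb, h, HahnSeries.coeff_one,
    if_neg ((zero_lt_orderTop_iff hb0).mp hb).ne', coeff_exp] at hcoeff
  simp only [Nat.factorial_one, Nat.cast_one, div_one, map_one, one_mul] at hcoeff
  exact leadingCoeff_ne_zero.mpr hb0 hcoeff.symm

theorem memUplus_iff {x : HahnSeries ℝ ℝ} : memUplus x ↔ 0 ≤ x.orderTop ∧ 0 < x.coeff 0 := by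
  constructor
  · rintro ⟨hx0, hord, hlc⟩
    have hc : x.coeff 0 = x.leadingCoeff := by rw [leadingCoeff_eq, hord]
    rw [← order_eq_orderTop_of_ne_zero hx0, hord, hc]
    exact ⟨le_rfl, hlc⟩
  · rintro ⟨hx, hc⟩
    have hord : x.order = 0 :=
      (order_le_of_coeff_ne_zero hc.ne').antisymm (zero_le_orderTop_iff.mp hx)
    exact ⟨ne_zero_of_coeff_ne_zero hc.ne', hord, by rwa [leadingCoeff_eq, hord]⟩

theorem expO_smul (w : HahnSeries ℝ ℝ) (γ : ℝ) :
    expO (γ • w) = single 0 (Real.exp (γ * w.coeff 0)) * E (γ • (w - single 0 (w.coeff 0))) := by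
  rw [expO, HahnSeries.coeff_smul, smul_eq_mul, smul_sub,
    ← single_zero_mul_eq_smul (x := single 0 (w.coeff 0)), single_mul_single, add_zero]

theorem expO_smul_add {w : HahnSeries ℝ ℝ} (hw : 0 ≤ w.orderTop) (γ γ' : ℝ) :
    expO ((γ + γ') • w) = expO (γ • w) * expO (γ' • w) := by
  rw [expO_smul, expO_smul, expO_smul, E_smul_add (zero_lt_orderTop_sub_single_coeff_zero hw),
    mul_mul_mul_comm, single_mul_single, add_zero, ← Real.exp_add, add_mul]

theorem expO_zero : expO 0 = 1 := by
  rw [expO, HahnSeries.coeff_zero, Real.exp_zero, single_zero_one, one_mul, map_zero, sub_zero,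
    E_eq_heval (by simp), heval_apply, SummableFamily.powerSeriesFamily_hsum_zero,
    constantCoeff_exp, one_smul]

theorem coeff_expO_zero {w : HahnSeries ℝ ℝ} (hw : 0 ≤ w.orderTop) :
    (expO w).coeff 0 = Real.exp (w.coeff 0) := by
  rw [expO, coeff_single_zero_mul, E_eq_heval (zero_lt_orderTop_sub_single_coeff_zero hw),
    coeff_heval_zero, constantCoeff_exp, mul_one]

theorem memUplus_expO {w : HahnSeries ℝ ℝ} (hw : 0 ≤ w.orderTop) : memUplus (expO w) := by
  have hm := zero_lt_orderTop_sub_single_coeff_zero hw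
  refine memUplus_iff.mpr ⟨?_, by rw [coeff_expO_zero hw]; exact Real.exp_pos _⟩
  rw [expO, E_eq_heval hm]
  refine le_trans ?_ orderTop_add_le_mul
  rw [orderTop_single (Real.exp_pos _).ne', WithTop.coe_zero, zero_add]
  exact zero_le_orderTop_heval hm _

theorem eq_zero_of_expO_eq_one {w : HahnSeries ℝ ℝ} (hw : 0 ≤ w.orderTop) (h : expO w = 1) :
    w = 0 := by
  have hw0 : w.coeff 0 = 0 := by
    have := coeff_expO_zero hw
    rwa [h, HahnSeries.coeff_one, if_pos rfl, eq_comm, Real.exp_eq_one_iff] at this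
  have hm := zero_lt_orderTop_sub_single_coeff_zero hw
  rw [hw0, map_zero, sub_zero] at hm
  rw [expO, hw0, Real.exp_zero, single_zero_one, one_mul, map_zero, sub_zero] at h
  exact eq_zero_of_E_eq_one hm h

theorem expO_smul_injective {w : HahnSeries ℝ ℝ} (hw : 0 ≤ w.orderTop) (hw0 : w ≠ 0) :
    Function.Injective fun γ : ℝ => expO (γ • w) := by
  intro γ γ' h
  have hnonneg : ∀ r : ℝ, 0 ≤ (r • w).orderTop := fun r => hw.trans (orderTop_le_orderTop_smul r w)
  have hsplit : expO (γ • w) = expO ((γ - γ') • w) * expO (γ' • w) := by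
    rw [← expO_smul_add hw, sub_add_cancel]
  rw [show expO (γ • w) = expO (γ' • w) from h] at hsplit
  have h1 : expO ((γ - γ') • w) = 1 :=
    (mul_eq_right₀ (memUplus_expO (hnonneg γ')).1).mp hsplit.symm
  have := eq_zero_of_expO_eq_one (hnonneg _) h1
  exact sub_eq_zero.mp ((smul_eq_zero.mp this).resolve_right hw0)

theorem exists_expO_eq {u : HahnSeries ℝ ℝ} (hu : memUplus u) :
    ∃ w, 0 ≤ w.orderTop ∧ expO w = u := by
  obtain ⟨hu, hc⟩ := memUplus_iff.mp hu
  set c := u.coeff 0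
  set t := c⁻¹ • (u - single 0 c)
  have ht : 0 < t.orderTop :=
    (zero_lt_orderTop_sub_single_coeff_zero hu).trans_le (orderTop_le_orderTop_smul _ _)
  set s := heval t (log ℝ)
  have hs : 0 < s.orderTop := zero_lt_orderTop_heval ht constantCoeff_log
  have hs0 : s.coeff 0 = 0 := coeff_eq_zero_of_lt_orderTop hs
  refine ⟨single 0 (Real.log c) + s, ?_, ?_⟩
  · exact le_trans (le_min orderTop_single_le hs.le) min_orderTop_le_orderTop_add
  · rw [expO, HahnSeries.coeff_add, coeff_single_same, hs0, add_zero, add_sub_cancel_left,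
      E_heval_log ht, Real.exp_log hc, mul_add, mul_one, single_zero_mul_eq_smul, smul_smul,
      mul_inv_cancel₀ hc.ne', one_smul, add_sub_cancel]

theorem zero_le_orderTop_logO {u : HahnSeries ℝ ℝ} (hu : memUplus u) : 0 ≤ (logO u).orderTop :=
  Function.invFunOn_mem (exists_expO_eq hu)

theorem expO_logO {u : HahnSeries ℝ ℝ} (hu : memUplus u) : expO (logO u) = u :=
  Function.invFunOn_eq (exists_expO_eq hu)

end

theorem vv_of_leadingCoeff_pos {a : HahnSeries ℝ ℝ} (ha : 0 < a.leadingCoeff) :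
    vv a = Real.exp (-a.order) := by
  rw [vv, Real.sign_of_pos ha, one_mul]

theorem vv_pos {a : HahnSeries ℝ ℝ} (ha : 0 < a.leadingCoeff) : 0 < vv a := by
  rw [vv_of_leadingCoeff_pos ha]
  exact Real.exp_pos _

theorem diagPi_mul {r r' : ℝ} (hr : r ≠ 0) (hr' : r' ≠ 0) :
    diagPi (r * r') = diagPi r * diagPi r' := by
  rw [diagPi, diagPi, diagPi, single_mul_single, abs_mul,
    Real.log_mul (abs_ne_zero.mpr hr) (abs_ne_zero.mpr hr'), neg_add]

theorem diagPi_exp_neg (o : ℝ) : diagPi (Real.exp (-o)) = single o (Real.exp (-o)) := by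
  rw [diagPi, abs_of_pos (Real.exp_pos _), Real.log_exp, neg_neg]

theorem memUplus_div_diagPi_vv {a : HahnSeries ℝ ℝ} (ha : 0 < a.leadingCoeff) :
    memUplus (a / diagPi (vv a)) := by
  have hd : diagPi (vv a) ≠ 0 := by
    rw [vv_of_leadingCoeff_pos ha, diagPi_exp_neg]
    exact single_ne_zero (Real.exp_pos _).ne'
  have hu0 : a / diagPi (vv a) ≠ 0 := div_ne_zero (leadingCoeff_ne_zero.mp ha.ne') hd
  have hu : a / diagPi (vv a) * diagPi (vv a) = a := div_mul_cancel₀ a hd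
  rw [vv_of_leadingCoeff_pos ha, diagPi_exp_neg] at hd hu hu0 ⊢
  refine ⟨hu0, ?_, ?_⟩
  · have := congrArg order hu
    rw [order_mul hu0 hd, order_single (Real.exp_pos _).ne'] at this
    linarith
  · have := congrArg leadingCoeff hu
    rw [leadingCoeff_mul, leadingCoeff_of_single] at this
    rw [← this] at ha
    exact pos_of_mul_pos_left ha (Real.exp_pos _).le

theorem hpow_single (b : HahnSeries ℝ ℝ) (γ : ℝ) : hpow b (single 0 γ) = expO (γ • logO b) := by
  rw [hpow, single_zero_mul_eq_smul]

theorem tp_add {a : HahnSeries ℝ ℝ} (ha : 0 < a.leadingCoeff) (γ γ' : ℝ) :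
    tp a (γ + γ') = tp a γ * tp a γ' := by
  have hv := vv_pos ha
  simp only [tp, hpow_single]
  rw [Real.rpow_add hv, diagPi_mul (Real.rpow_pos_of_pos hv γ).ne' (Real.rpow_pos_of_pos hv γ').ne',
    expO_smul_add (zero_le_orderTop_logO (memUplus_div_diagPi_vv ha))]
  ring

theorem order_tp {a : HahnSeries ℝ ℝ} (ha : 0 < a.leadingCoeff) (γ : ℝ) :
    (tp a γ).order = γ * a.order := by
  have hv := vv_pos ha
  have hr := Real.rpow_pos_of_pos hv γ
  have hexp := memUplus_expO
    ((zero_le_orderTop_logO (memUplus_div_diagPi_vv ha)).trans (orderTop_le_orderTop_smul γ _))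
  rw [tp, hpow_single, diagPi, order_mul (single_ne_zero hr.ne') hexp.1, hexp.2.1, add_zero,
    order_single hr.ne', abs_of_pos hr, Real.log_rpow hv, vv_of_leadingCoeff_pos ha, Real.log_exp]
  ring

theorem tp_of_order_eq_zero {a : HahnSeries ℝ ℝ} (ha : 0 < a.leadingCoeff) (h0 : a.order = 0)
    (γ : ℝ) : tp a γ = expO (γ • logO a) := by
  have hv : vv a = 1 := by rw [vv_of_leadingCoeff_pos ha, h0, neg_zero, Real.exp_zero]
  have hd : diagPi 1 = 1 := by rw [diagPi, abs_one, Real.log_one, neg_zero, single_zero_one]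
  rw [tp, hpow_single, hv, Real.one_rpow, hd, div_one, one_mul]

theorem tp_injective {a : HahnSeries ℝ ℝ} (ha : 0 < a.leadingCoeff) (ha1 : a ≠ 1) :
    Function.Injective (tp a) := by
  intro γ γ' h
  by_cases h0 : a.order = 0
  · have hu : memUplus a := ⟨leadingCoeff_ne_zero.mp ha.ne', h0, ha⟩
    have hl : logO a ≠ 0 := fun hl => ha1 (by rw [← expO_logO hu, hl, expO_zero])
    apply expO_smul_injective (zero_le_orderTop_logO hu) hl
    simpa only [tp_of_order_eq_zero ha h0] using h
  · have := congrArg order h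
    rw [order_tp ha, order_tp ha] at this
    exact mul_right_cancel₀ h0 this

theorem stmt_14_general (a : HahnSeries ℝ ℝ) (hla : 0 < a.leadingCoeff)
    (ha1 : a ≠ 1) :
    (∀ γ γ' : ℝ, tp a (γ + γ') = tp a γ * tp a γ') ∧
    (∀ γ γ' : ℝ, tp a γ = tp a γ' → γ = γ') :=
  ⟨tp_add hla, fun _ _ h => tp_injective hla ha1 h⟩

theorem stmt_14 (a : HahnSeries ℝ ℝ) (ha : a ≠ 0) (hla : 0 < a.leadingCoeff)
    (ha1 : a ≠ 1) :
    (∀ γ γ' : ℝ, tp a (γ + γ') = tp a γ * tp a γ') ∧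
    (∀ γ γ' : ℝ, tp a γ = tp a γ' → γ = γ') :=
  stmt_14_general a hla ha1
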